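/- arXiv:math/0210184 — 5 statements merged into one kernel-verified Lean document; each statement's English description precedes it below -/
import Mathlib

section
/- Let p be a prime and A a commutative ring which is separated and complete for the p-adic topology (i.e., the natural map A → lim_n A/p^n A is a bijection). Then the natural map from the set of p-power-compatible sequences in A to the inverse limit of A/pA along the Frobenius, namely the map lim_{x↦x^p} A → lim_{x↦x^p} (A/pA) sending (x_i)_{i≥0} to (x_i mod p)_{i≥0}, is a bijection. -/
/-!
The set of `p`-power-compatible sequences in a commutative monoid `M` is Mathlib's
`Perfection M p`, and the map of the theorem is the forward map of the Teichmüller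
equivalence `Perfection.quotientMulEquiv : Perfection A p ≃* Perfection (A ⧸ (p)) p`, whose
inverse sends a compatible sequence `(yᵢ)` mod `p` to the limits `xᵢ = lim_n ỹ_{i+n}^(p^n)` of
`p^n`-th powers of arbitrary lifts. That equivalence needs `A ⧸ (p)` to have characteristic `p`,
i.e. `p` not a unit; if `p` is a unit, `p`-adic separatedness forces `A = 0`.
-/

theorem IsHausdorff.subsingleton_of_isUnit {R M : Type*} [CommRing R] [AddCommGroup M]
    [Module R M] {a : R} [h : IsHausdorff (Ideal.span {a}) M] (ha : IsUnit a) :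
    Subsingleton M :=
  IsHausdorff.subsingleton (Ideal.span_singleton_eq_top.mpr ha ▸ h)

/-- For a commutative ring `A` which is separated and complete for the `p`-adic topology,
the natural map `lim_{x ↦ x^p} A → lim_{x ↦ x^p} (A/pA)`, sending a `p`-power-compatible
sequence in `A` to its componentwise reduction modulo `p`, is a bijection. -/
theorem tilt_of_padically_complete_ring_bijective (p : ℕ) [Fact p.Prime]
    (A : Type*) [CommRing A] [IsAdicComplete (Ideal.span {(p : A)}) A] :
    Function.Bijective
      (fun x : {f : ℕ → A // ∀ i, (f (i + 1)) ^ p = f i} =>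
        (⟨fun i => Ideal.Quotient.mk (Ideal.span {(p : A)}) (x.1 i),
          fun i => by rw [← map_pow, x.2 i]⟩ :
          {f : ℕ → A ⧸ Ideal.span {(p : A)} // ∀ i, (f (i + 1)) ^ p = f i})) := by
  by_cases hp : IsUnit (p : A)
  · have := IsHausdorff.subsingleton_of_isUnit (M := A) hp
    exact ⟨fun _ _ _ ↦ Subsingleton.elim _ _,
      fun _ ↦ ⟨⟨fun _ ↦ 0, fun _ ↦ Subsingleton.elim _ _⟩, Subsingleton.elim _ _⟩⟩
  · have := CharP.quotient A p hp
    exact (Perfection.quotientMulEquiv p (Ideal.span {(p : A)})).bijective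
end

section
/- Fix a prime p and let C be the completion of an algebraic closure of ℚ_p, with absolute value |·|_p. For every x ∈ C with |x|_p < 1: (1) the series Σ_{k≥1} (−1)^{k+1} x^k / k converges in C; (2) the limit lim_{n→∞} p^{−n}·((1+x)^{p^n} − 1) exists in C; and (3) these two are equal: Σ_{k≥1} (−1)^{k+1} x^k / k = lim_{n→∞} p^{−n}·((1+x)^{p^n} − 1). In other words, the p-adic logarithm log(1+x) equals lim_n ((1+x)^{p^n} − 1)/p^n on the open unit disk. -/
open Filter Topology

private lemma ultra_sub_le_max {M : Type*} [SeminormedAddCommGroup M] [IsUltrametricDist M]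
    (a b : M) : ‖a - b‖ ≤ max ‖a‖ ‖b‖ := by
  rw [sub_eq_add_neg]
  simpa using IsUltrametricDist.norm_add_le_max a (-b)

private lemma padic_one_le_norm_mul (p : ℕ) [Fact p.Prime] (m : ℕ) (hm : 0 < m) :
    1 ≤ ‖((m : ℚ_[p]))‖ * m := by
  have hm0 : ((m : ℚ_[p])) ≠ 0 := Nat.cast_ne_zero.mpr hm.ne'
  rw [Padic.norm_eq_zpow_neg_valuation hm0, Padic.valuation_natCast]
  have hle : (p:ℝ) ^ (padicValNat p m) ≤ m := by
    exact_mod_cast Nat.le_of_dvd hm pow_padicValNat_dvd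
  have hp0 : (0:ℝ) < p := by exact_mod_cast (Fact.out : p.Prime).pos
  have h1 : (1:ℝ) = (p:ℝ) ^ (-(padicValNat p m : ℤ)) * (p:ℝ) ^ (padicValNat p m : ℕ) := by
    rw [← zpow_natCast, ← zpow_add₀ hp0.ne']
    simp
  rw [h1]
  gcongr

private lemma padic_choose_congr (p : ℕ) [Fact p.Prime] (n j : ℕ) (hj : j < p ^ n) :
    ‖(((p ^ n - 1).choose j : ℚ_[p])) - (-1) ^ j‖ ≤ (p:ℝ) ^ (-(n:ℤ)) * (j + 1) := by
  have hp : p.Prime := Fact.out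
  have hp0 : (0:ℝ) < p := by exact_mod_cast hp.pos
  set B : ℝ := (p:ℝ) ^ (-(n:ℤ)) with hB
  have hB0 : 0 < B := zpow_pos hp0 _
  induction j with
  | zero => simp [hB0.le]
  | succ j ih =>
    have hj' : j < p ^ n := lt_trans (Nat.lt_succ_self j) hj
    have ihb := ih hj'
    have hnat : (p ^ n - 1).choose (j+1) * (j+1) = (p ^ n - 1).choose j * (p ^ n - 1 - j) :=
      Nat.choose_succ_right_eq _ _
    have hjle : j + 1 ≤ p ^ n - 1 := Nat.le_sub_one_of_lt hj
    have h1le : 1 ≤ p ^ n := Nat.one_le_iff_ne_zero.mpr (pow_ne_zero n hp.pos.ne')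
    set c : ℕ → ℚ_[p] := fun i => ((p ^ n - 1).choose i : ℚ_[p]) with hc
    have hcast : c (j+1) * ((j:ℚ_[p])+1) = c j * ((p:ℚ_[p]) ^ n - 1 - j) := by
      have h := congrArg (fun t : ℕ => (t : ℚ_[p])) hnat
      push_cast [Nat.cast_sub (Nat.le_of_succ_le hjle),
        Nat.cast_sub h1le] at h
      simpa [hc] using h
    have hj1 : ((j:ℚ_[p]) + 1) ≠ 0 := by
      have h : ((j+1 : ℕ) : ℚ_[p]) ≠ 0 := Nat.cast_ne_zero.mpr (Nat.succ_ne_zero j)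
      simpa using h
    have hform : c (j+1) - (-1)^(j+1) =
        (c j * (p:ℚ_[p]) ^ n - ((j:ℚ_[p])+1) * (c j - (-1)^j)) / ((j:ℚ_[p]) + 1) := by
      rw [eq_div_iff hj1]
      ring_nf
      ring_nf at hcast
      linear_combination hcast
    have hcnorm : ‖c j‖ ≤ 1 := by
      have h := Padic.norm_int_le_one (p := p) ((p ^ n - 1).choose j : ℤ)
      simpa [hc] using h
    have hppow : ‖(p:ℚ_[p]) ^ n‖ = B := Padic.norm_p_pow n
    set A : ℝ := ‖((j:ℚ_[p])+1)‖ with hA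
    have hA0 : 0 < A := norm_pos_iff.mpr hj1
    have h1A : 1 ≤ A * ((j:ℝ)+1) := by
      have h := padic_one_le_norm_mul p (j+1) (Nat.succ_pos j)
      push_cast at h
      simpa [hA] using h
    have hnum : ‖c j * (p:ℚ_[p]) ^ n - ((j:ℚ_[p])+1) * (c j - (-1)^j)‖ ≤
        A * (B * ((j:ℝ) + 1)) := by
      refine le_trans (ultra_sub_le_max _ _) (max_le ?_ ?_)
      · rw [norm_mul, hppow]
        calc ‖c j‖ * B ≤ 1 * B := by gcongr
          _ ≤ (A * ((j:ℝ)+1)) * B := by gcongr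
          _ = A * (B * ((j:ℝ) + 1)) := by ring
      · rw [norm_mul]
        gcongr
    have hfin : ‖c (j+1) - (-1)^(j+1)‖ ≤ B * ((j:ℝ) + 1) := by
      rw [hform, norm_div, ← hA, div_le_iff₀ hA0]
      calc ‖c j * (p:ℚ_[p]) ^ n - ((j:ℚ_[p])+1) * (c j - (-1)^j)‖
          ≤ A * (B * ((j:ℝ) + 1)) := hnum
        _ = B * ((j:ℝ) + 1) * A := by ring
    refine le_trans hfin ?_
    push_cast
    nlinarith [hB0.le]

/-- In `C`, the completion of an algebraic closure of `ℚ_p` (formalized as a complete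
algebraically closed nonarchimedean normed field whose norm extends the `p`-adic one),
for every `x` with `‖x‖ < 1`: the series `Σ_{k ≥ 1} (-1)^{k+1} x^k / k` converges, the limit
`lim_n ((1+x)^{p^n} - 1)/p^n` exists, and the two are equal; i.e. the `p`-adic logarithm
`log(1+x)` equals `lim_n ((1+x)^{p^n} - 1)/p^n` on the open unit disk. -/
theorem padic_log_eq_limit (p : ℕ) [Fact p.Prime]
    (C : Type*) [NormedField C] [CompleteSpace C] [IsAlgClosed C] [IsUltrametricDist C]
    (hnorm : ∀ q : ℚ, ‖(q : C)‖ = ‖(q : ℚ_[p])‖)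
    (x : C) (hx : ‖x‖ < 1) :
    ∃ L : C,
      HasSum (fun k : ℕ => (-1) ^ k * x ^ (k + 1) / ((k : C) + 1)) L ∧
      Tendsto (fun n : ℕ => ((1 + x) ^ p ^ n - 1) / (p : C) ^ n) atTop (𝓝 L) := by
  have hp : p.Prime := Fact.out
  have hp0 : (0:ℝ) < p := by exact_mod_cast hp.pos
  set r : ℝ := ‖x‖ with hr
  have hr0 : 0 ≤ r := norm_nonneg x
  have hnormN : ∀ m : ℕ, ‖((m : C))‖ = ‖((m : ℚ_[p]))‖ := by
    intro m
    have h := hnorm (m : ℚ)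
    push_cast at h
    exact h
  have hne : ∀ m : ℕ, 0 < m → ((m : C)) ≠ 0 := by
    intro m hm h
    have h1 : ‖((m:C))‖ = 0 := by rw [h, norm_zero]
    rw [hnormN] at h1
    exact (Nat.cast_ne_zero.mpr hm.ne' : ((m:ℚ_[p])) ≠ 0) (norm_eq_zero.mp h1)
  have hj1ne : ∀ j : ℕ, ((j:C)+1) ≠ 0 := by
    intro j
    have h := hne (j+1) (Nat.succ_pos j)
    push_cast at h
    exact h
  have hinv : ∀ j : ℕ, ‖((j:C)+1)‖⁻¹ ≤ (j:ℝ)+1 := by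
    intro j
    have h1 := padic_one_le_norm_mul p (j+1) (Nat.succ_pos j)
    push_cast at h1
    have heq : ‖((j:C)+1)‖ = ‖((j:ℚ_[p])+1)‖ := by
      have h := hnormN (j+1)
      push_cast at h
      exact h
    have hpos : 0 < ‖((j:C)+1)‖ := norm_pos_iff.mpr (hj1ne j)
    rw [heq] at hpos ⊢
    have hmc : ‖((j:ℚ_[p])+1)‖ * ‖((j:ℚ_[p])+1)‖⁻¹ = 1 := mul_inv_cancel₀ hpos.ne'
    nlinarith [inv_nonneg.mpr hpos.le]
  have hterm : ∀ k : ℕ, ‖(-1:C)^k * x^(k+1)/((k:C)+1)‖ ≤ ((k:ℝ)+1) * r^(k+1) := by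
    intro k
    rw [norm_div, norm_mul, norm_pow, norm_pow, norm_neg, norm_one, one_pow, one_mul,
      div_eq_mul_inv]
    calc r^(k+1) * ‖((k:C)+1)‖⁻¹ ≤ r^(k+1) * ((k:ℝ)+1) := by
          gcongr
          exact hinv k
      _ = ((k:ℝ)+1) * r^(k+1) := by ring
  have hxr : ‖r‖ < 1 := by rwa [Real.norm_eq_abs, abs_of_nonneg hr0]
  have hsummand : Summable (fun k : ℕ => ((k:ℝ)+1) * r^(k+1)) := by
    have h := summable_pow_mul_geometric_of_norm_lt_one (R := ℝ) 1 hxr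
    have h2 := (summable_nat_add_iff 1).mpr h
    simpa using h2
  have hsum : Summable (fun k : ℕ => (-1:C)^k * x^(k+1)/((k:C)+1)) :=
    Summable.of_norm_bounded hsummand hterm
  obtain ⟨L, hL⟩ := hsum
  refine ⟨L, hL, ?_⟩
  set S : ℕ → C := fun m => ∑ j ∈ Finset.range m, (-1:C)^j * x^(j+1)/((j:C)+1) with hS
  have hpc : ∀ n : ℕ, ((p:C))^n ≠ 0 := by
    intro n
    have h := hne (p^n) (pow_pos hp.pos n)
    push_cast at h
    exact h
  -- binomial identity
  have hid : ∀ n : ℕ, ((1+x)^(p^n) - 1)/(p:C)^n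
      = ∑ j ∈ Finset.range (p^n), ((p^n - 1).choose j : C) * x^(j+1)/((j:C)+1) := by
    intro n
    have hbin : (1+x)^(p^n)
        = ∑ k ∈ Finset.range (p^n+1), x^k * (((p^n).choose k : ℕ) : C) := by
      rw [add_comm]
      have h := add_pow x (1:C) (p^n)
      simpa using h
    rw [hbin, Finset.sum_range_succ']
    simp only [pow_zero, Nat.choose_zero_right, Nat.cast_one, one_mul, mul_one]
    rw [add_sub_cancel_right, Finset.sum_div]
    refine Finset.sum_congr rfl fun j hj => ?_
    have hnat : p^n * (p^n - 1).choose j = (p^n).choose (j+1) * (j+1) := by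
      have h := Nat.add_one_mul_choose_eq (p^n - 1) j
      have hs : (p ^ n - 1).succ = p ^ n := Nat.succ_pred_eq_of_pos (pow_pos hp.pos n)
      rw [← Nat.succ_eq_add_one, hs] at h
      simpa [Nat.succ_eq_add_one] using h
    rw [div_eq_div_iff (hpc n) (hj1ne j)]
    have h := congrArg (fun t : ℕ => (t:C)) hnat
    push_cast at h
    linear_combination (-(x^(j+1))) * h
  -- difference
  have hdiff : ∀ n : ℕ, ((1+x)^(p^n) - 1)/(p:C)^n - S (p^n)
      = ∑ j ∈ Finset.range (p^n),
          (((p^n - 1).choose j : C) - (-1)^j) * (x^(j+1)/((j:C)+1)) := by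
    intro n
    rw [hid n, hS]
    rw [← Finset.sum_sub_distrib]
    refine Finset.sum_congr rfl fun j _ => ?_
    ring
  -- transfer of congruence norm to C
  have htrans : ∀ (m j : ℕ), ‖((m : C)) - (-1)^j‖ = ‖((m : ℚ_[p])) - (-1)^j‖ := by
    intro m j
    have h := hnorm ((m : ℚ) - (-1)^j)
    push_cast at h
    exact_mod_cast h
  -- bounding constant
  set g : ℕ → ℝ := fun j => ((j:ℝ)+1)^2 * r^(j+1) with hg
  have hgsum : Summable g := by
    have h := summable_pow_mul_geometric_of_norm_lt_one (R := ℝ) 2 hxr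
    have h2 := (summable_nat_add_iff 1).mpr h
    simpa [hg] using h2
  obtain ⟨M, hM⟩ := hgsum.tendsto_atTop_zero.bddAbove_range
  have hM' : ∀ j, g j ≤ M := fun j => hM ⟨j, rfl⟩
  have hM0 : 0 ≤ M := le_trans (by positivity) (hM' 0)
  -- ultrametric bound
  have hbound : ∀ n : ℕ, ‖((1+x)^(p^n) - 1)/(p:C)^n - S (p^n)‖ ≤ (p:ℝ)^(-(n:ℤ)) * M := by
    intro n
    rw [hdiff n]
    refine IsUltrametricDist.norm_sum_le_of_forall_le_of_nonneg (by positivity) ?_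
    intro j hj
    have hj' : j < p^n := Finset.mem_range.mp hj
    have h1 : ‖(((p^n - 1).choose j : ℕ) : C) - (-1)^j‖ ≤ (p:ℝ)^(-(n:ℤ)) * ((j:ℝ)+1) := by
      rw [htrans]
      exact padic_choose_congr p n j hj'
    have h2 : ‖x^(j+1)/((j:C)+1)‖ ≤ r^(j+1) * ((j:ℝ)+1) := by
      rw [norm_div, norm_pow, div_eq_mul_inv]
      gcongr
      exact hinv j
    calc ‖((((p^n - 1).choose j : ℕ) : C) - (-1)^j) * (x^(j+1)/((j:C)+1))‖
        = ‖(((p^n - 1).choose j : ℕ) : C) - (-1)^j‖ * ‖x^(j+1)/((j:C)+1)‖ := norm_mul _ _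
      _ ≤ ((p:ℝ)^(-(n:ℤ)) * ((j:ℝ)+1)) * (r^(j+1) * ((j:ℝ)+1)) :=
          mul_le_mul h1 h2 (norm_nonneg _) (by positivity)
      _ = (p:ℝ)^(-(n:ℤ)) * g j := by rw [hg]; ring
      _ ≤ (p:ℝ)^(-(n:ℤ)) * M := by
          have := hM' j
          gcongr
  -- conclude
  have hto0 : Tendsto (fun n : ℕ => (p:ℝ)^(-(n:ℤ)) * M) atTop (𝓝 0) := by
    have heq : (fun n : ℕ => (p:ℝ)^(-(n:ℤ)) * M) = fun n : ℕ => ((p:ℝ)⁻¹)^n * M := by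
      funext n
      rw [zpow_neg, zpow_natCast, inv_pow]
    rw [heq]
    have hlt : (p:ℝ)⁻¹ < 1 := by
      rw [inv_lt_one_iff₀]
      right
      exact_mod_cast hp.one_lt
    have h := (tendsto_pow_atTop_nhds_zero_of_lt_one (by positivity) hlt).mul_const M
    simpa using h
  have hdiff0 : Tendsto (fun n : ℕ => ((1+x)^(p^n) - 1)/(p:C)^n - S (p^n)) atTop (𝓝 0) :=
    squeeze_zero_norm hbound hto0
  have hSseq : Tendsto (fun n : ℕ => S (p^n)) atTop (𝓝 L) :=
    hL.tendsto_sum_nat.comp (tendsto_pow_atTop_atTop_of_one_lt hp.one_lt)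
  have hfin := hdiff0.add hSseq
  simpa [sub_add_cancel] using hfin
end

section
/- Fix a prime p and let C be the completion of an algebraic closure of ℚ_p, with absolute value |·|_p. Let x ∈ C with 0 < |x|_p < 1 and such that 1+x is not a p-power root of unity, and for n ≥ 1 set Φ_n(x) = ((1+x)^{p^n} − 1) / ((1+x)^{p^{n−1}} − 1). Then the infinite product ∏_{n≥1} (Φ_n(x)/p) converges in C (its partial products converge), and log(1+x) = x · ∏_{n≥1} (Φ_n(x)/p), where log(1+x) = Σ_{k≥1} (−1)^{k+1} x^k/k. Moreover, the sub-products over even indices and over odd indices, log⁺ := ∏_{n≥1, n even} (Φ_n(x)/p) and log⁻ := ∏_{n≥1, n odd} (Φ_n(x)/p), both converge, and log(1+x) = x · log⁻ · log⁺. -/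
open Filter Topology

section PadicLogAux

variable {p : ℕ} [hp : Fact p.Prime] {C : Type*} [NormedField C]

lemma pl_binom_expand (m : ℕ) (y : C) :
    (1 + y) ^ m - 1 = ∑ k ∈ Finset.range m, y ^ (k+1) * ((m.choose (k+1) : ℕ) : C) := by
  have h := add_pow y 1 m
  simp only [one_pow, mul_one] at h
  rw [add_comm y 1] at h
  rw [h, Finset.sum_range_succ' (fun j => y ^ j * ((m.choose j : ℕ) : C)) m]
  simp

lemma pl_choose_id (N k : ℕ) :
    (((p ^ N).choose (k+1) : ℕ) : C) * ((k : C) + 1)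
      = ((p : C)) ^ N * (((p ^ N - 1).choose k : ℕ) : C) := by
  have h1 : 1 ≤ p ^ N := Nat.one_le_pow _ _ hp.out.pos
  have hnat : p ^ N * (p ^ N - 1).choose k = (p ^ N).choose (k+1) * (k+1) := by
    have := Nat.add_one_mul_choose_eq (p ^ N - 1) k
    rwa [Nat.sub_add_cancel h1] at this
  have := congrArg (fun n : ℕ => (n : C)) hnat
  push_cast at this
  exact this.symm

lemma pl_choose_rec (m k : ℕ) (h : k + 1 ≤ m) :
    ((m.choose (k+1) : ℕ) : C) * ((k : C) + 1)
      = ((m.choose k : ℕ) : C) * ((m : C) - (k : C)) := by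
  have hnat : m.choose (k+1) * (k+1) = m.choose k * (m - k) := Nat.choose_succ_right_eq m k
  have := congrArg (fun n : ℕ => (n : C)) hnat
  push_cast [Nat.cast_sub (by omega : k ≤ m)] at this
  exact this

variable (hnorm : ∀ q : ℚ, ‖(q : C)‖ = ‖(q : ℚ_[p])‖)
include hnorm

lemma pl_normC_nat (m : ℕ) : ‖(m : C)‖ = ‖(m : ℚ_[p])‖ := by
  simpa using hnorm (m : ℚ)

lemma pl_normC_nat_le_one (m : ℕ) : ‖(m : C)‖ ≤ 1 := by
  rw [pl_normC_nat hnorm]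
  exact_mod_cast Padic.norm_int_le_one (m : ℤ)

lemma pl_normC_p : ‖(p : C)‖ = (p : ℝ)⁻¹ := by
  have := hnorm (p : ℚ); simp only [Rat.cast_natCast] at this
  rw [this, Padic.norm_p]

lemma pl_normC_p_lt_one : ‖(p : C)‖ < 1 := by
  rw [pl_normC_p hnorm]
  exact inv_lt_one_of_one_lt₀ (by exact_mod_cast hp.out.one_lt)

lemma pl_normC_nat_dvd (m : ℕ) (h : p ∣ m) : ‖(m : C)‖ ≤ (p : ℝ)⁻¹ := by
  rw [pl_normC_nat hnorm]
  have := (Padic.norm_int_le_pow_iff_dvd (p := p) (m : ℤ) 1).mpr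
    (by exact_mod_cast pow_one p ▸ h)
  simpa using this

lemma pl_normC_nat_lower (m : ℕ) (h : 1 ≤ m) : 1 ≤ (m : ℝ) * ‖(m : C)‖ := by
  rw [pl_normC_nat hnorm]
  have hm0 : ((m : ℚ_[p])) ≠ 0 := by exact_mod_cast Nat.cast_ne_zero.mpr (by omega)
  rw [Padic.norm_eq_zpow_neg_valuation hm0, Padic.valuation_natCast]
  have hle : (p : ℝ) ^ (padicValNat p m) ≤ m := by
    exact_mod_cast Nat.le_of_dvd (by omega) (pow_padicValNat_dvd (p := p) (n := m))
  rw [zpow_neg, zpow_natCast]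
  have h2 : (0:ℝ) < (p:ℝ)^(padicValNat p m) := by
    have : (0:ℝ) < p := by exact_mod_cast hp.out.pos
    positivity
  have h3 : (p:ℝ)^(padicValNat p m) * ((p:ℝ)^(padicValNat p m))⁻¹
      ≤ (m:ℝ) * ((p:ℝ)^(padicValNat p m))⁻¹ := by gcongr
  simpa [mul_inv_cancel₀ h2.ne'] using h3

lemma pl_natCast_ne_zero (n : ℕ) (h : n ≠ 0) : (n : C) ≠ 0 := by
  intro h0
  have h1 := pl_normC_nat (p := p) hnorm n
  rw [h0, norm_zero] at h1
  have h2 : ((n : ℚ_[p])) = 0 := by rwa [eq_comm, norm_eq_zero] at h1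
  exact h (Nat.cast_eq_zero.mp h2)

lemma pl_k1_ne_zero (k : ℕ) : ((k : C) + 1) ≠ 0 := by
  have := pl_natCast_ne_zero (p := p) hnorm (k+1) (by omega)
  push_cast at this
  exact this

lemma pl_norm_k1_pos (k : ℕ) : 0 < ‖(k : C) + 1‖ :=
  norm_pos_iff.mpr (pl_k1_ne_zero hnorm k)

lemma pl_norm_div_k1 (a : C) (k : ℕ) : ‖a / ((k : C) + 1)‖ ≤ ((k:ℝ)+1) * ‖a‖ := by
  have h1 : (1:ℝ) ≤ ((k+1 : ℕ) : ℝ) * ‖((k+1 : ℕ) : C)‖ :=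
    pl_normC_nat_lower hnorm (k+1) (by omega)
  push_cast at h1
  have h2 := pl_norm_k1_pos hnorm k
  rw [norm_div, div_le_iff₀ h2]
  calc ‖a‖ = 1 * ‖a‖ := (one_mul _).symm
    _ ≤ (((k:ℝ)+1) * ‖(k : C) + 1‖) * ‖a‖ :=
        mul_le_mul_of_nonneg_right h1 (norm_nonneg _)
    _ = ((k:ℝ)+1) * ‖a‖ * ‖(k : C) + 1‖ := by ring

lemma pl_tendsto_choose_pow (k : ℕ) :
    Tendsto (fun N : ℕ => (((p ^ N - 1).choose k : ℕ) : C)) atTop (𝓝 ((-1 : C) ^ k)) := by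
  induction k with
  | zero => simpa using tendsto_const_nhds
  | succ k ih =>
    have hk1 : ((k : C) + 1) ≠ 0 := pl_k1_ne_zero hnorm k
    have hpN : Tendsto (fun N : ℕ => p ^ N) atTop atTop :=
      tendsto_pow_atTop_atTop_of_one_lt hp.out.one_lt
    have hev : ∀ᶠ N in atTop, k + 2 ≤ p ^ N := hpN.eventually_ge_atTop (k + 2)
    have heq : (fun N : ℕ => (((p ^ N - 1).choose (k+1) : ℕ) : C))
        =ᶠ[atTop] (fun N : ℕ => (((p ^ N - 1).choose k : ℕ) : C)
            * (((p : C) ^ N - 1) - (k : C)) / ((k : C) + 1)) := by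
      filter_upwards [hev] with N hN
      have h := pl_choose_rec (C := C) (p ^ N - 1) k (by omega)
      have hcast : (((p ^ N - 1 : ℕ)) : C) = (p : C) ^ N - 1 := by
        push_cast [Nat.cast_sub (by omega : 1 ≤ p ^ N)]; ring
      rw [hcast] at h
      field_simp
      linear_combination h
    have hpow : Tendsto (fun N : ℕ => (p : C) ^ N) atTop (𝓝 0) :=
      tendsto_pow_atTop_nhds_zero_of_norm_lt_one (pl_normC_p_lt_one hnorm)
    have hlim : Tendsto (fun N : ℕ => (((p ^ N - 1).choose k : ℕ) : C)
        * (((p : C) ^ N - 1) - (k : C)) / ((k : C) + 1)) atTop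
        (𝓝 ((-1 : C) ^ k * ((0 - 1) - (k : C)) / ((k : C) + 1))) :=
      (ih.mul ((hpow.sub_const 1).sub_const (k : C))).div_const _
    have : ((-1 : C) ^ k * ((0 - 1) - (k : C)) / ((k : C) + 1)) = (-1 : C) ^ (k + 1) := by
      field_simp
      ring
    rw [this] at hlim
    exact hlim.congr' heq.symm

end PadicLogAux

section PadicLogUltra

variable {C : Type*} [NormedField C] [IsUltrametricDist C]

lemma pl_norm_le_one_of_sub_one {a : C} {δ : ℝ} (hδ : δ ≤ 1) (h : ‖a - 1‖ ≤ δ) : ‖a‖ ≤ 1 := by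
  have : a = (a - 1) + 1 := by ring
  rw [this]
  exact (IsUltrametricDist.norm_add_le_max _ _).trans (by simp [max_le_iff, h.trans hδ])

lemma pl_prod_sub_one_norm_le {s : Finset ℕ} {f : ℕ → C} {δ : ℝ} (hδ0 : 0 ≤ δ) (hδ : δ ≤ 1)
    (h : ∀ i ∈ s, ‖f i - 1‖ ≤ δ) : ‖(∏ i ∈ s, f i) - 1‖ ≤ δ := by
  induction s using Finset.cons_induction with
  | empty => simpa
  | cons a s ha ih =>
    have h1 := h a (Finset.mem_cons_self _ _)
    have h2 := ih (fun i hi => h i (Finset.mem_cons_of_mem hi))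
    have hprod : ‖∏ i ∈ s, f i‖ ≤ 1 := by
      rw [norm_prod]
      exact Finset.prod_le_one (fun i _ => norm_nonneg _)
        (fun i hi => pl_norm_le_one_of_sub_one hδ (h i (Finset.mem_cons_of_mem hi)))
    have key : f a * ∏ i ∈ s, f i - 1
        = (f a - 1) * ∏ i ∈ s, f i + ((∏ i ∈ s, f i) - 1) := by ring
    rw [Finset.prod_cons, key]
    refine (IsUltrametricDist.norm_add_le_max _ _).trans (max_le ?_ h2)
    rw [norm_mul]
    calc ‖f a - 1‖ * ‖∏ i ∈ s, f i‖ ≤ δ * 1 :=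
          mul_le_mul h1 hprod (norm_nonneg _) hδ0
      _ = δ := mul_one _

lemma pl_prod_norm_le_one {s : Finset ℕ} {f : ℕ → C} {δ : ℝ} (hδ : δ ≤ 1)
    (h : ∀ i ∈ s, ‖f i - 1‖ ≤ δ) : ‖∏ i ∈ s, f i‖ ≤ 1 := by
  rw [norm_prod]
  exact Finset.prod_le_one (fun i _ => norm_nonneg _)
    (fun i hi => pl_norm_le_one_of_sub_one hδ (h i hi))

lemma pl_exists_lim_filtered_prod [CompleteSpace C] (f : ℕ → C) (q : ℕ → Prop) [DecidablePred q]
    (hf : Tendsto (fun n => ‖f n - 1‖) atTop (𝓝 0)) :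
    ∃ P : C, Tendsto (fun N => ∏ n ∈ (Finset.Icc 1 N).filter q, f n) atTop (𝓝 P) := by
  set E : ℕ → C := fun N => ∏ n ∈ (Finset.Icc 1 N).filter q, f n with hE
  have hsplit : ∀ {a b : ℕ}, a ≤ b →
      E b = E a * ∏ n ∈ (Finset.Ioc a b).filter q, f n := by
    intro a b hab
    have hIcc : Finset.Icc 1 b = Finset.Icc 1 a ∪ Finset.Ioc a b := by
      ext n; simp only [Finset.mem_Icc, Finset.mem_union, Finset.mem_Ioc]; omega
    have hdisj : Disjoint ((Finset.Icc 1 a).filter q) ((Finset.Ioc a b).filter q) :=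
      Finset.disjoint_filter_filter (Finset.disjoint_left.mpr
        (fun n hn hn' => by
          simp only [Finset.mem_Icc, Finset.mem_Ioc] at hn hn'; omega))
    rw [hE]
    dsimp only
    rw [hIcc, Finset.filter_union, Finset.prod_union hdisj]
  have hcauchy : CauchySeq E := by
    rw [Metric.cauchySeq_iff']
    intro ε hε
    obtain ⟨N1, hN1⟩ := Metric.tendsto_atTop.mp hf 1 one_pos
    have hN1' : ∀ m, N1 ≤ m → ‖f m - 1‖ ≤ 1 := by
      intro m hm
      have := hN1 m hm
      rw [Real.dist_eq, sub_zero, abs_of_nonneg (norm_nonneg _)] at this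
      exact this.le
    set B := ‖E N1‖ with hB
    have hδpos : 0 < min 1 (ε / (2 * (B + 1))) := lt_min one_pos (by positivity)
    set δ := min 1 (ε / (2 * (B + 1))) with hδdef
    have hδ0 : 0 ≤ δ := hδpos.le
    have hδ1 : δ ≤ 1 := min_le_left _ _
    obtain ⟨N2, hN2⟩ := Metric.tendsto_atTop.mp hf δ hδpos
    have hN2' : ∀ m, N2 ≤ m → ‖f m - 1‖ ≤ δ := by
      intro m hm
      have := hN2 m hm
      rw [Real.dist_eq, sub_zero, abs_of_nonneg (norm_nonneg _)] at this
      exact this.le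
    refine ⟨max N1 N2, fun n hn => ?_⟩
    set N0 := max N1 N2 with hN0
    have hEbound : ‖E N0‖ ≤ B := by
      rw [hsplit (le_max_left N1 N2 : N1 ≤ N0), norm_mul, hB]
      have h1 : ‖∏ m ∈ (Finset.Ioc N1 N0).filter q, f m‖ ≤ 1 := by
        refine pl_prod_norm_le_one le_rfl (fun m hm => ?_)
        have : N1 < m := by
          simp only [Finset.mem_filter, Finset.mem_Ioc] at hm; omega
        exact hN1' m this.le
      calc ‖E N1‖ * ‖∏ m ∈ (Finset.Ioc N1 N0).filter q, f m‖ ≤ ‖E N1‖ * 1 :=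
            mul_le_mul_of_nonneg_left h1 (norm_nonneg _)
        _ = ‖E N1‖ := mul_one _
    have key : dist (E n) (E N0) ≤ ‖E N0‖ * δ := by
      rw [dist_eq_norm, hsplit hn]
      have : E N0 * ∏ m ∈ (Finset.Ioc N0 n).filter q, f m - E N0
          = E N0 * ((∏ m ∈ (Finset.Ioc N0 n).filter q, f m) - 1) := by ring
      rw [this, norm_mul]
      refine mul_le_mul_of_nonneg_left ?_ (norm_nonneg _)
      refine pl_prod_sub_one_norm_le hδ0 hδ1 (fun m hm => ?_)
      have : N0 < m := by
        simp only [Finset.mem_filter, Finset.mem_Ioc] at hm; omega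
      exact hN2' m (le_trans (le_max_right N1 N2) this.le)
    calc dist (E n) (E N0) ≤ ‖E N0‖ * δ := key
      _ ≤ (B + 1) * (ε / (2 * (B + 1))) := by
          refine mul_le_mul (hEbound.trans (by linarith)) (min_le_right _ _) hδ0 (by positivity)
      _ = ε / 2 := by
          have hB1 : B + 1 ≠ 0 := by rw [hB]; positivity
          field_simp
      _ < ε := by linarith
  obtain ⟨P, hP⟩ := cauchySeq_tendsto_of_complete hcauchy
  exact ⟨P, hP⟩

lemma pl_norm_tsum_le {f : ℕ → C} {a : ℝ} (hf : Summable f) (ha : 0 ≤ a)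
    (h : ∀ k, ‖f k‖ ≤ a) : ‖∑' k, f k‖ ≤ a := by
  have ht : Tendsto (fun s : Finset ℕ => ‖∑ k ∈ s, f k‖) atTop (𝓝 ‖∑' k, f k‖) :=
    (continuous_norm.tendsto _).comp hf.hasSum
  exact le_of_tendsto' ht (fun s =>
    IsUltrametricDist.norm_sum_le_of_forall_le_of_nonneg ha (fun i _ => h i))

end PadicLogUltra

section PadicLogY

variable {p : ℕ} [hp : Fact p.Prime] {C : Type*} [NormedField C] [IsUltrametricDist C]
  (hnorm : ∀ q : ℚ, ‖(q : C)‖ = ‖(q : ℚ_[p])‖) (x : C) (hx : ‖x‖ < 1)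
include hnorm hx

lemma pl_y_le (n : ℕ) :
    ‖(1 + x) ^ p ^ n - 1‖ ≤ (max (p:ℝ)⁻¹ (‖x‖^(p-1)))^n * ‖x‖ := by
  have hp1 : (1:ℝ) < p := by exact_mod_cast hp.out.one_lt
  have hr0 : 0 ≤ max (p:ℝ)⁻¹ (‖x‖^(p-1)) := le_trans (by positivity) (le_max_left _ _)
  have hr1 : max (p:ℝ)⁻¹ (‖x‖^(p-1)) ≤ 1 := by
    apply max_le
    · exact inv_le_one_of_one_le₀ hp1.le
    · exact pow_le_one₀ (norm_nonneg _) hx.le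
  set r := max (p:ℝ)⁻¹ (‖x‖^(p-1)) with hrdef
  induction n with
  | zero => simp [pow_one]
  | succ n ih =>
    have hyx : ‖(1 + x) ^ p ^ n - 1‖ ≤ ‖x‖ := by
      calc ‖(1 + x) ^ p ^ n - 1‖ ≤ r^n * ‖x‖ := ih
        _ ≤ 1 * ‖x‖ := mul_le_mul_of_nonneg_right (pow_le_one₀ hr0 hr1) (norm_nonneg _)
        _ = ‖x‖ := one_mul _
    set y := (1 + x) ^ p ^ n - 1 with hydef
    have hy1 : ‖y‖ ≤ 1 := hyx.trans hx.le
    have hrw : (1 + x) ^ p ^ (n+1) - 1 = (1 + y) ^ p - 1 := by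
      have h1 : (1:C) + y = (1 + x) ^ p ^ n := by rw [hydef]; ring
      rw [h1, ← pow_mul, ← pow_succ]
    have step : ‖(1 + y) ^ p - 1‖ ≤ r * ‖y‖ := by
      rw [pl_binom_expand p y]
      refine IsUltrametricDist.norm_sum_le_of_forall_le_of_nonneg
        (by positivity) (fun k hk => ?_)
      rw [Finset.mem_range] at hk
      rw [norm_mul, norm_pow]
      rcases eq_or_lt_of_le (Nat.succ_le_of_lt hk : k + 1 ≤ p) with heq | hlt
      · have heq' : k + 1 = p := heq
        rw [heq', Nat.choose_self]
        simp only [Nat.cast_one, norm_one, mul_one]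
        calc ‖y‖ ^ p = ‖y‖^(p-1) * ‖y‖ := by
              rw [← pow_succ]
              congr 1
              omega
          _ ≤ ‖x‖^(p-1) * ‖y‖ :=
              mul_le_mul_of_nonneg_right
                (pow_le_pow_left₀ (norm_nonneg _) hyx _) (norm_nonneg _)
          _ ≤ r * ‖y‖ := mul_le_mul_of_nonneg_right (le_max_right _ _) (norm_nonneg _)
      · have hdvd : (p : ℕ) ∣ p.choose (k+1) :=
          hp.out.dvd_choose_self (by omega) hlt
        calc ‖y‖ ^ (k+1) * ‖((p.choose (k+1) : ℕ) : C)‖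
            ≤ ‖y‖ * (p:ℝ)⁻¹ := by
              refine mul_le_mul ?_ (pl_normC_nat_dvd hnorm _ hdvd) (norm_nonneg _)
                (norm_nonneg _)
              calc ‖y‖^(k+1) ≤ ‖y‖^1 :=
                    pow_le_pow_of_le_one (norm_nonneg _) hy1 (by omega)
                _ = ‖y‖ := pow_one _
          _ = (p:ℝ)⁻¹ * ‖y‖ := mul_comm _ _
          _ ≤ r * ‖y‖ := mul_le_mul_of_nonneg_right (le_max_left _ _) (norm_nonneg _)
    calc ‖(1 + x) ^ p ^ (n+1) - 1‖ = ‖(1 + y) ^ p - 1‖ := by rw [hrw]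
      _ ≤ r * ‖y‖ := step
      _ ≤ r * (r^n * ‖x‖) := mul_le_mul_of_nonneg_left ih hr0
      _ = r^(n+1) * ‖x‖ := by ring

lemma pl_y_le_x (n : ℕ) : ‖(1 + x) ^ p ^ n - 1‖ ≤ ‖x‖ := by
  have hp1 : (1:ℝ) < p := by exact_mod_cast hp.out.one_lt
  have hr0 : 0 ≤ max (p:ℝ)⁻¹ (‖x‖^(p-1)) := le_trans (by positivity) (le_max_left _ _)
  have hr1 : max (p:ℝ)⁻¹ (‖x‖^(p-1)) ≤ 1 :=
    max_le (inv_le_one_of_one_le₀ hp1.le) (pow_le_one₀ (norm_nonneg _) hx.le)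
  calc ‖(1 + x) ^ p ^ n - 1‖ ≤ (max (p:ℝ)⁻¹ (‖x‖^(p-1)))^n * ‖x‖ := pl_y_le hnorm x hx n
    _ ≤ 1 * ‖x‖ := mul_le_mul_of_nonneg_right (pow_le_one₀ hr0 hr1) (norm_nonneg _)
    _ = ‖x‖ := one_mul _

lemma pl_phi_sub_one_le (hroot : ∀ n : ℕ, (1 + x) ^ p ^ n ≠ 1) (n : ℕ) :
    ‖((1 + x) ^ p ^ (n+1) - 1) / ((1 + x) ^ p ^ n - 1) / (p : C) - 1‖
      ≤ (p:ℝ) * ‖(1 + x) ^ p ^ n - 1‖ := by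
  have hppos : (0:ℝ) < p := by exact_mod_cast hp.out.pos
  set y := (1 + x) ^ p ^ n - 1 with hydef
  have hy0 : y ≠ 0 := sub_ne_zero.mpr (hroot n)
  have hynorm : 0 < ‖y‖ := norm_pos_iff.mpr hy0
  have hy1 : ‖y‖ ≤ 1 := (pl_y_le_x hnorm x hx n).trans hx.le
  have hp0 : (p : C) ≠ 0 := by
    intro h
    have h1 := pl_normC_p (C := C) hnorm
    rw [h, norm_zero] at h1
    have h2 : (0:ℝ) < (p:ℝ)⁻¹ := inv_pos.mpr hppos
    linarith
  obtain ⟨P, hP⟩ : ∃ P, p = P + 1 := ⟨p - 1, (Nat.succ_pred_eq_of_pos hp.out.pos).symm⟩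
  have hrw : (1 + x) ^ p ^ (n+1) - 1 = (1 + y) ^ p - 1 := by
    have h1 : (1:C) + y = (1 + x) ^ p ^ n := by rw [hydef]; ring
    rw [h1, ← pow_mul, ← pow_succ]
  have hnum : (1 + y) ^ p - 1 - (p:C) * y
      = ∑ k ∈ Finset.range P, y ^ (k+2) * ((p.choose (k+2) : ℕ) : C) := by
    rw [pl_binom_expand p y,
      show Finset.range p = Finset.range (P+1) from by rw [hP],
      Finset.sum_range_succ' (fun k => y ^ (k+1) * ((p.choose (k+1) : ℕ) : C)) P]
    have hc1 : p.choose 1 = p := Nat.choose_one_right p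
    rw [show (0:ℕ)+1 = 1 from rfl, hc1]
    push_cast
    ring
  have hnumnorm : ‖(1 + y) ^ p - 1 - (p:C) * y‖ ≤ ‖y‖^2 := by
    rw [hnum]
    refine IsUltrametricDist.norm_sum_le_of_forall_le_of_nonneg (by positivity)
      (fun k _ => ?_)
    rw [norm_mul, norm_pow]
    calc ‖y‖ ^ (k+2) * ‖((p.choose (k+2) : ℕ) : C)‖ ≤ ‖y‖^2 * 1 := by
          refine mul_le_mul ?_ (pl_normC_nat_le_one hnorm _) (norm_nonneg _) (by positivity)
          exact pow_le_pow_of_le_one (norm_nonneg _) hy1 (by omega)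
      _ = ‖y‖^2 := mul_one _
  have key : ((1 + x) ^ p ^ (n+1) - 1) / y / (p : C) - 1
      = ((1 + y) ^ p - 1 - (p:C) * y) / (y * (p:C)) := by
    rw [hrw]
    field_simp
  rw [key, norm_div, norm_mul, pl_normC_p hnorm]
  rw [div_le_iff₀ (by positivity)]
  calc ‖(1 + y) ^ p - 1 - (p:C) * y‖ ≤ ‖y‖^2 := hnumnorm
    _ = (p:ℝ) * ‖y‖ * (‖y‖ * (p:ℝ)⁻¹) := by field_simp

end PadicLogY
/-- In `C`, the completion of an algebraic closure of `ℚ_p`, let `0 < ‖x‖ < 1` with `1 + x`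
not a `p`-power root of unity, and set `Φ_n(x) = ((1+x)^{p^n} - 1)/((1+x)^{p^{n-1}} - 1)`.
Then the infinite product `∏_{n ≥ 1} Φ_n(x)/p` converges, `log(1+x) = x · ∏_{n ≥ 1} Φ_n(x)/p`,
the sub-products over even and odd indices `log⁺ = ∏_{n even} Φ_n(x)/p`,
`log⁻ = ∏_{n odd} Φ_n(x)/p` both converge, and `log(1+x) = x · log⁻ · log⁺`. -/
theorem padic_log_product_formula (p : ℕ) [Fact p.Prime]
    (C : Type*) [NormedField C] [CompleteSpace C] [IsAlgClosed C] [IsUltrametricDist C]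
    (hnorm : ∀ q : ℚ, ‖(q : C)‖ = ‖(q : ℚ_[p])‖)
    (x : C) (hx0 : 0 < ‖x‖) (hx : ‖x‖ < 1)
    (hroot : ∀ n : ℕ, (1 + x) ^ p ^ n ≠ 1) :
    ∃ L P Pe Po : C,
      HasSum (fun k : ℕ => (-1) ^ k * x ^ (k + 1) / ((k : C) + 1)) L ∧
      Tendsto (fun N : ℕ => ∏ n ∈ Finset.Icc 1 N,
          ((1 + x) ^ p ^ n - 1) / ((1 + x) ^ p ^ (n - 1) - 1) / (p : C))
        atTop (𝓝 P) ∧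
      L = x * P ∧
      Tendsto (fun N : ℕ => ∏ n ∈ (Finset.Icc 1 N).filter (fun n => Even n),
          ((1 + x) ^ p ^ n - 1) / ((1 + x) ^ p ^ (n - 1) - 1) / (p : C))
        atTop (𝓝 Pe) ∧
      Tendsto (fun N : ℕ => ∏ n ∈ (Finset.Icc 1 N).filter (fun n => ¬ Even n),
          ((1 + x) ^ p ^ n - 1) / ((1 + x) ^ p ^ (n - 1) - 1) / (p : C))
        atTop (𝓝 Po) ∧
      L = x * Po * Pe := by
  have hpprime : p.Prime := Fact.out
  have hppos : (0:ℝ) < p := by exact_mod_cast hpprime.pos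
  have hxne : x ≠ 0 := norm_pos_iff.mp hx0
  have hp0 : (p : C) ≠ 0 := pl_natCast_ne_zero hnorm p hpprime.ne_zero
  have hy0 : ∀ n : ℕ, (1 + x) ^ p ^ n - 1 ≠ 0 := fun n => sub_ne_zero.mpr (hroot n)
  -- the log series
  set t : ℕ → C := fun k => (-1) ^ k * x ^ (k + 1) / ((k : C) + 1) with htdef
  have htnorm : ∀ k, ‖t k‖ ≤ ((k:ℝ)+1) * ‖x‖^(k+1) := by
    intro k
    have := pl_norm_div_k1 hnorm ((-1:C)^k * x^(k+1)) k
    rw [htdef]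
    refine this.trans ?_
    rw [norm_mul, norm_pow, norm_pow, norm_neg, norm_one, one_pow, one_mul]
  -- the weight sequence tends to zero
  have hw0 : Tendsto (fun k : ℕ => ((k:ℝ)+1) * ‖x‖^(k+1)) atTop (𝓝 0) := by
    have hsum : Summable (fun n : ℕ => (n:ℝ)^1 * ‖x‖^n) :=
      summable_pow_mul_geometric_of_norm_lt_one 1
        (by rwa [Real.norm_of_nonneg (norm_nonneg x)])
    have hg := hsum.tendsto_atTop_zero
    have := (tendsto_add_atTop_iff_nat 1).mpr hg
    refine this.congr (fun k => ?_)
    push_cast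
    ring
  have htsummable : Summable t := by
    refine NonarchimedeanAddGroup.summable_of_tendsto_cofinite_zero ?_
    rw [Nat.cofinite_eq_atTop]
    rw [tendsto_zero_iff_norm_tendsto_zero]
    exact squeeze_zero (fun k => norm_nonneg _) htnorm hw0
  set L : C := ∑' k, t k with hLdef
  -- coefficients of the finite binomial expansion
  set b : ℕ → ℕ → C := fun N k => (((p^N).choose (k+1) : ℕ) : C) / (p:C)^N with hbdef
  have hbeq : ∀ N k, b N k = (((p^N - 1).choose k : ℕ) : C) / ((k:C)+1) := by
    intro N k
    have hid := pl_choose_id (p := p) (C := C) N k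
    have hk1 := pl_k1_ne_zero hnorm k
    rw [hbdef]
    field_simp
    linear_combination hid
  have hbnorm : ∀ N k, ‖b N k * x^(k+1)‖ ≤ ((k:ℝ)+1) * ‖x‖^(k+1) := by
    intro N k
    rw [hbeq N k, div_mul_eq_mul_div]
    refine (pl_norm_div_k1 hnorm _ k).trans ?_
    rw [norm_mul, norm_pow]
    have h1 : ‖(((p^N - 1).choose k : ℕ) : C)‖ ≤ 1 := pl_normC_nat_le_one hnorm _
    have h2 : ‖(((p^N - 1).choose k : ℕ) : C)‖ * ‖x‖^(k+1) ≤ 1 * ‖x‖^(k+1) :=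
      mul_le_mul_of_nonneg_right h1 (by positivity)
    calc ((k:ℝ)+1) * (‖(((p^N - 1).choose k : ℕ) : C)‖ * ‖x‖^(k+1))
        ≤ ((k:ℝ)+1) * (1 * ‖x‖^(k+1)) := by
          refine mul_le_mul_of_nonneg_left h2 (by positivity)
      _ = ((k:ℝ)+1) * ‖x‖^(k+1) := by ring
  have hbsummable : ∀ N, Summable (fun k => b N k * x^(k+1)) := by
    intro N
    refine summable_of_ne_finset_zero (s := Finset.range (p^N)) (fun k hk => ?_)
    rw [Finset.mem_range, not_lt] at hk
    have : (p^N).choose (k+1) = 0 := Nat.choose_eq_zero_of_lt (by omega)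
    rw [hbdef]
    simp [this]
  have hbt : ∀ k, Tendsto (fun N => b N k * x^(k+1)) atTop (𝓝 (t k)) := by
    intro k
    have h1 : Tendsto (fun N => b N k) atTop (𝓝 ((-1:C)^k / ((k:C)+1))) := by
      have := (pl_tendsto_choose_pow hnorm k).div_const ((k:C)+1)
      refine this.congr (fun N => ?_)
      rw [hbeq N k]
    have h2 := h1.mul_const (x^(k+1))
    have h3 : (-1:C)^k / ((k:C)+1) * x^(k+1) = t k := by
      rw [htdef]
      ring
    rwa [h3] at h2
  have hLN : ∀ N, ∑' k, b N k * x^(k+1) = ((1+x)^(p^N) - 1) / (p:C)^N := by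
    intro N
    rw [tsum_eq_sum (s := Finset.range (p^N)) (fun k hk => by
      rw [Finset.mem_range, not_lt] at hk
      have : (p^N).choose (k+1) = 0 := Nat.choose_eq_zero_of_lt (by omega)
      rw [hbdef]; simp [this])]
    rw [pl_binom_expand (p^N) x, Finset.sum_div]
    refine Finset.sum_congr rfl (fun k _ => ?_)
    rw [hbdef]
    ring
  -- main analytic step
  have hmain' : Tendsto (fun N => ∑' k, b N k * x^(k+1)) atTop (𝓝 L) := by
    rw [Metric.tendsto_atTop]
    intro ε hε
    obtain ⟨K, hK⟩ := Metric.tendsto_atTop.mp hw0 (ε/2) (by linarith)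
    have hK' : ∀ k, K ≤ k → ((k:ℝ)+1) * ‖x‖^(k+1) ≤ ε/2 := by
      intro k hk
      have := hK k hk
      rw [Real.dist_eq, sub_zero, abs_of_nonneg (by positivity)] at this
      exact this.le
    have hhead : Tendsto
        (fun N => ∑ k ∈ Finset.range K, (b N k * x^(k+1) - t k)) atTop (𝓝 0) := by
      have h1 : Tendsto (fun N => ∑ k ∈ Finset.range K, (b N k * x^(k+1) - t k)) atTop
          (𝓝 (∑ k ∈ Finset.range K, (t k - t k))) :=
        tendsto_finset_sum _ (fun k _ => (hbt k).sub tendsto_const_nhds)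
      simpa using h1
    obtain ⟨N1, hN1⟩ := Metric.tendsto_atTop.mp hhead (ε/2) (by linarith)
    refine ⟨N1, fun N hN => ?_⟩
    rw [dist_eq_norm]
    have hdsum : Summable (fun k => b N k * x^(k+1) - t k) := (hbsummable N).sub htsummable
    have hsub : ∑' k, b N k * x^(k+1) - L = ∑' k, (b N k * x^(k+1) - t k) := by
      rw [hLdef, Summable.tsum_sub (hbsummable N) htsummable]
    have hsplit := Summable.sum_add_tsum_nat_add (f := fun k => b N k * x^(k+1) - t k) K hdsum
    rw [hsub, ← hsplit]
    refine lt_of_le_of_lt (IsUltrametricDist.norm_add_le_max _ _) (max_lt ?_ ?_)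
    · have := hN1 N hN
      rw [dist_eq_norm, sub_zero] at this
      linarith
    · have hdsum2 : Summable (fun k : ℕ => b N (k+K) * x^((k+K)+1) - t (k+K)) :=
        (summable_nat_add_iff (f := fun k => b N k * x^(k+1) - t k) K).mpr hdsum
      have hub : ∀ a c : C, ‖a - c‖ ≤ max ‖a‖ ‖c‖ := fun a c => by
        rw [sub_eq_add_neg]
        simpa using IsUltrametricDist.norm_add_le_max a (-c)
      have htail : ‖∑' k, (b N (k+K) * x^((k+K)+1) - t (k+K))‖ ≤ ε/2 := by
        refine pl_norm_tsum_le hdsum2 (by linarith) (fun k => ?_)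
        refine (hub _ _).trans (max_le ?_ ?_)
        · exact (hbnorm N (k+K)).trans (hK' (k+K) (by omega))
        · exact (htnorm (k+K)).trans (hK' (k+K) (by omega))
      exact lt_of_le_of_lt htail (by linarith)
  have hmain : Tendsto (fun N => ((1+x)^(p^N) - 1) / (p:C)^N) atTop (𝓝 L) :=
    hmain'.congr hLN
  -- the factors of the product
  set F : ℕ → C := fun n =>
    ((1 + x) ^ p ^ n - 1) / ((1 + x) ^ p ^ (n - 1) - 1) / (p : C) with hFdef
  have hFtend : Tendsto (fun n => ‖F n - 1‖) atTop (𝓝 0) := by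
    rw [← tendsto_add_atTop_iff_nat 1]
    have hr0 : 0 ≤ max (p:ℝ)⁻¹ (‖x‖^(p-1)) := le_trans (by positivity) (le_max_left _ _)
    have hr1 : max (p:ℝ)⁻¹ (‖x‖^(p-1)) < 1 := by
      apply max_lt
      · exact inv_lt_one_of_one_lt₀ (by exact_mod_cast hpprime.one_lt)
      · refine pow_lt_one₀ (norm_nonneg _) hx ?_
        have := hpprime.two_le
        omega
    have hg : Tendsto (fun m : ℕ => (p:ℝ) * ((max (p:ℝ)⁻¹ (‖x‖^(p-1)))^m * ‖x‖))
        atTop (𝓝 0) := by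
      have h1 := (tendsto_pow_atTop_nhds_zero_of_lt_one hr0 hr1).mul_const ‖x‖
      have h2 := h1.const_mul (p:ℝ)
      simpa using h2
    refine squeeze_zero (fun m => norm_nonneg _) (fun m => ?_) hg
    have hb1 : ‖F (m+1) - 1‖ ≤ (p:ℝ) * ‖(1 + x) ^ p ^ m - 1‖ := by
      rw [hFdef]
      simpa using pl_phi_sub_one_le hnorm x hx hroot m
    refine hb1.trans ?_
    exact mul_le_mul_of_nonneg_left (pl_y_le hnorm x hx m) (by positivity)
  obtain ⟨Pe, hPe⟩ := pl_exists_lim_filtered_prod F (fun n => Even n) hFtend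
  obtain ⟨Po, hPo⟩ := pl_exists_lim_filtered_prod F (fun n => ¬ Even n) hFtend
  have hT : Tendsto (fun N => ∏ n ∈ Finset.Icc 1 N, F n) atTop (𝓝 (Pe * Po)) := by
    refine (hPe.mul hPo).congr (fun N => ?_)
    exact Finset.prod_filter_mul_prod_filter_not (Finset.Icc 1 N) (fun n => Even n) F
  -- telescoping
  have htel : ∀ N, x * ∏ n ∈ Finset.Icc 1 N, F n = ((1+x)^(p^N) - 1) / (p:C)^N := by
    intro N
    induction N with
    | zero =>
      simp only [Finset.Icc_eq_empty_of_lt (by omega : (0:ℕ) < 1), Finset.prod_empty, mul_one]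
      rw [pow_zero, pow_zero, pow_one]
      field_simp
      ring
    | succ N ih =>
      rw [Finset.prod_Icc_succ_top (by omega : 1 ≤ N+1), ← mul_assoc, ih, hFdef]
      simp only [Nat.add_sub_cancel]
      have hyN := hy0 N
      have hpNe : ((p:C))^N ≠ 0 := pow_ne_zero _ hp0
      rw [pow_succ]
      field_simp
      ring
  have hxT : Tendsto (fun N => x * ∏ n ∈ Finset.Icc 1 N, F n) atTop (𝓝 (x * (Pe * Po))) :=
    hT.const_mul x
  have hL' : x * (Pe * Po) = L := tendsto_nhds_unique (hxT.congr htel) hmain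
  have hL : L = x * (Pe * Po) := hL'.symm
  refine ⟨L, Pe * Po, Pe, Po, ?_, hT, hL, hPe, hPo, by rw [hL]; ring⟩
  have := htsummable.hasSum
  rwa [← hLdef, htdef] at this
end

section
/- Let p be a prime and R a perfect commutative ring of characteristic p (the map x ↦ x^p is an automorphism of R). Let A be a commutative ring such that: p is not a zero divisor in A; A is separated and complete for the p-adic topology (the natural map A → lim_n A/p^n A is a bijection); and there is given a ring isomorphism ḡ : A/pA ≅ R. Then there exists a unique ring isomorphism f : W(R) → A whose reduction modulo p equals ḡ^{-1} composed with the canonical projection W(R) → R. In other words, a strict p-ring with perfect residue ring R is uniquely isomorphic to the ring of Witt vectors W(R). -/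
/-!
For `x ∈ W(R)` and `n ≥ 0`, lift the coefficients of `F⁻ⁿ x` (`F` the Witt vector Frobenius)
arbitrarily to `A` and take the `n`-th ghost component. Since `a ≡ b [p]` implies
`a ^ p ^ k ≡ b ^ p ^ k [p ^ (k + 1)]`, this is well defined modulo `p ^ (n + 1)` and gives a ring
homomorphism `W(R) → A ⧸ p ^ (n + 1)`. These are compatible because `w_(n+1) = w_n ∘ F`, so by
completeness they assemble to a ring homomorphism `f : W(R) → A`, which reduces to `ḡ⁻¹`
modulo `p`. A homomorphism of separated complete rings that is bijective modulo `p`, with no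
`p`-torsion in the target, is bijective by successive approximation.

For uniqueness, two such homomorphisms agree modulo `p`, hence modulo `p ^ (n + 1)` on the
Teichmüller representatives `[r] = [r ^ p ^ (-n)] ^ p ^ n`, and these determine maps out of `W(R)`
into rings in which `p` is nilpotent.
-/

open Ideal

theorem pow_sub_pow_mem_span_pow {A : Type*} [CommRing A] {p : ℕ} {a b : A}
    (h : a - b ∈ span {(p : A)}) (n : ℕ) :
    a ^ p ^ n - b ^ p ^ n ∈ span {(p : A)} ^ (n + 1) := by
  rw [span_singleton_pow, mem_span_singleton]
  exact dvd_sub_pow_of_dvd_sub (mem_span_singleton.mp h) n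

namespace RingHom

variable {B A : Type*} [CommRing B] [CommRing A] {p : ℕ} (f : B →+* A)

theorem injective_of_comap_span_le [IsHausdorff (span {(p : B)}) B]
    (hreg : ∀ a : A, (p : A) * a = 0 → a = 0)
    (hf : (span {(p : A)}).comap f ≤ span {(p : B)}) : Function.Injective f := by
  have hpow : ∀ n b, f b = 0 → b ∈ span {(p : B)} ^ n := by
    intro n
    induction n with
    | zero => simp
    | succ n ih =>
      intro b hb
      obtain ⟨c, rfl⟩ := mem_span_singleton'.mp (hf (mem_comap.mpr (hb ▸ zero_mem _)))
      rw [map_mul, map_natCast, mul_comm] at hb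
      rw [pow_succ]
      exact mul_mem_mul (ih c (hreg _ hb)) (mem_span_singleton_self _)
  refine (injective_iff_map_eq_zero f).mpr fun b hb => IsHausdorff.haus ‹_› b fun n => ?_
  rw [SModEq.zero, smul_eq_mul, mul_top]
  exact hpow n b hb

theorem surjective_of_surjective_mk_comp [IsPrecomplete (span {(p : B)}) B]
    [IsHausdorff (span {(p : A)}) A]
    (hf : Function.Surjective (Ideal.Quotient.mk (span {(p : A)}) ∘ f)) :
    Function.Surjective f := by
  have step : ∀ a, ∃ b c, a = f b + p * c := fun a => by
    obtain ⟨b, hb⟩ := hf (Ideal.Quotient.mk _ a)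
    obtain ⟨c, hc⟩ := mem_span_singleton'.mp (Ideal.Quotient.eq.mp hb.symm)
    exact ⟨b, c, by linear_combination -hc⟩
  choose d c hdc using step
  intro a
  let s : ℕ → B := fun n => ∑ i ∈ Finset.range n, (p : B) ^ i * d (c^[i] a)
  have hs : ∀ n, a = f (s n) + p ^ n * c^[n] a := by
    intro n
    induction n with
    | zero => simp [s]
    | succ n ih =>
      simp only [s, Finset.sum_range_succ, map_add, map_mul, map_pow, map_natCast,
        Function.iterate_succ_apply']
      linear_combination ih + (p : A) ^ n * hdc (c^[n] a)
  have hcauchy :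
      ∀ {m n}, m ≤ n → s m ≡ s n [SMOD (span {(p : B)} ^ m • ⊤ : Submodule B B)] := by
    intro m n hmn
    rw [SModEq.comm, SModEq.sub_mem, smul_eq_mul, mul_top, ← Finset.sum_Ico_eq_sub _ hmn]
    refine sum_mem fun i hi => mul_mem_right _ _ ?_
    exact pow_le_pow_right (Finset.mem_Ico.mp hi).1 (pow_mem_pow (mem_span_singleton_self _) i)
  obtain ⟨L, hL⟩ := IsPrecomplete.prec ‹_› hcauchy
  refine ⟨L, (IsHausdorff.eq_iff_smodEq (I := span {(p : A)})).mpr fun n => ?_⟩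
  have hLn := hL n
  rw [SModEq.comm, SModEq.sub_mem, smul_eq_mul, mul_top, span_singleton_pow,
    mem_span_singleton] at hLn
  rw [SModEq.sub_mem, smul_eq_mul, mul_top, span_singleton_pow, mem_span_singleton]
  calc ((p : A) ^ n) ∣ f (L - s n) - p ^ n * c^[n] a := by
        refine dvd_sub ?_ (dvd_mul_right _ _)
        simpa only [map_pow, map_natCast] using map_dvd f hLn
    _ = f L - a := by rw [map_sub]; linear_combination hs n

end RingHom

namespace WittVector

variable {p : ℕ} [Fact p.Prime] {A : Type*} [CommRing A]

theorem map_frobenius {S : Type*} [CommRing S] (f : A →+* S) (x : WittVector p A) :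
    map f (frobenius x) = frobenius (map f x) := by
  ext n
  simp_rw [map_coeff, coeff_frobenius, MvPolynomial.map_aeval, funext (map_coeff f _),
    RingHom.ext_int _ (algebraMap ℤ S), MvPolynomial.aeval_eq_eval₂Hom]

theorem ghostComponent_sub_mem_of_map_mk_eq (n : ℕ) {x y : WittVector p A}
    (h : map (Ideal.Quotient.mk (span {(p : A)})) x = map (Ideal.Quotient.mk (span {(p : A)})) y) :
    ghostComponent n x - ghostComponent n y ∈ span {(p : A)} ^ (n + 1) := by
  simp only [ghostComponent_apply, aeval_wittPolynomial, ← Finset.sum_sub_distrib, ← mul_sub]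
  refine sum_mem fun i hi => ?_
  have hi : i + (n - i + 1) = n + 1 := by
    have := Finset.mem_range.mp hi
    omega
  have hcoeff : x.coeff i - y.coeff i ∈ span {(p : A)} := by
    rw [← Ideal.Quotient.eq, ← map_coeff, ← map_coeff, h]
  rw [← hi, pow_add]
  exact mul_mem_mul (pow_mem_pow (mem_span_singleton_self _) i)
    (pow_sub_pow_mem_span_pow hcoeff (n - i))

noncomputable def ghostComponentModPow (n : ℕ) :
    WittVector p (A ⧸ span {(p : A)}) →+* A ⧸ span {(p : A)} ^ (n + 1) :=
  (map (Ideal.Quotient.mk (span {(p : A)}))).liftOfSurjective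
    (map_surjective _ Ideal.Quotient.mk_surjective)
    ⟨(Ideal.Quotient.mk _).comp (ghostComponent n), fun x hx => by
      have := ghostComponent_sub_mem_of_map_mk_eq n (hx.trans (map_zero _).symm)
      rwa [map_zero, sub_zero, ← Ideal.Quotient.eq_zero_iff_mem] at this⟩

theorem ghostComponentModPow_map_mk (n : ℕ) (x : WittVector p A) :
    ghostComponentModPow n (map (Ideal.Quotient.mk (span {(p : A)})) x) =
      Ideal.Quotient.mk _ (ghostComponent n x) :=
  RingHom.liftOfSurjective_comp_apply _ _ _ x

theorem factorPow_ghostComponentModPow_succ (n : ℕ) (z : WittVector p (A ⧸ span {(p : A)})) :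
    Quotient.factorPow _ (n + 1).le_succ (ghostComponentModPow (n + 1) z) =
      ghostComponentModPow n (frobenius z) := by
  obtain ⟨x, rfl⟩ := map_surjective _ Ideal.Quotient.mk_surjective z
  rw [← map_frobenius, ghostComponentModPow_map_mk, ghostComponentModPow_map_mk,
    ghostComponent_frobenius, Quotient.factor_mk]

theorem factor_ghostComponentModPow_zero (z : WittVector p (A ⧸ span {(p : A)})) :
    Quotient.factor (pow_one (span {(p : A)})).le (ghostComponentModPow 0 z) = z.coeff 0 := by
  obtain ⟨x, rfl⟩ := map_surjective _ Ideal.Quotient.mk_surjective z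
  rw [ghostComponentModPow_map_mk, Quotient.factor_mk, map_coeff]
  simp [ghostComponent_apply]

section PerfectRing

variable {R : Type*} [CommRing R] [CharP R p] [PerfectRing R p]

theorem ringHom_ext_of_mk_eq [IsHausdorff (span {(p : A)}) A] {f f' : WittVector p R →+* A}
    (h : ∀ x, Ideal.Quotient.mk (span {(p : A)}) (f x) = Ideal.Quotient.mk _ (f' x)) :
    f = f' := by
  refine DFunLike.coe_injective <|
    IsHausdorff.StrictMono.funext' (span {(p : A)}) (add_left_strictMono (a := 1)) fun n x => ?_
  suffices (Ideal.Quotient.mk (span {(p : A)} ^ (n + 1))).comp f =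
      (Ideal.Quotient.mk _).comp f' from RingHom.congr_fun this x
  refine eq_of_apply_teichmuller_eq _ _ ⟨n + 1, ?_⟩ fun r => ?_
  · rw [← map_natCast (Ideal.Quotient.mk _), ← map_pow, Quotient.eq_zero_iff_mem]
    exact pow_mem_pow (mem_span_singleton_self _) _
  · obtain ⟨s, rfl⟩ := (iterateFrobeniusEquiv R p n).surjective r
    rw [iterateFrobeniusEquiv_def, map_pow, RingHom.comp_apply, RingHom.comp_apply, map_pow f,
      map_pow f', Ideal.Quotient.eq]
    exact pow_sub_pow_mem_span_pow (Ideal.Quotient.eq.mp (h _)) n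

variable (g : A ⧸ span {(p : A)} ≃+* R)

noncomputable def liftOfQuotientEquivModPow (n : ℕ) :
    WittVector p R →+* A ⧸ span {(p : A)} ^ (n + 1) :=
  (ghostComponentModPow n).comp ((map (g.symm : R →+* A ⧸ span {(p : A)})).comp
    ((frobeniusEquiv p R).symm ^ n : WittVector p R ≃+* WittVector p R))

theorem factorPow_comp_liftOfQuotientEquivModPow_succ (n : ℕ) :
    (Quotient.factorPow _ (n + 1).le_succ).comp (liftOfQuotientEquivModPow g (n + 1)) =
      liftOfQuotientEquivModPow g n := by
  ext x
  simp only [liftOfQuotientEquivModPow, RingHom.comp_apply, RingHom.coe_coe,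
    factorPow_ghostComponentModPow_succ]
  rw [← map_frobenius, pow_succ' (frobeniusEquiv p R).symm n, RingAut.mul_apply]
  congr 2
  exact (frobeniusEquiv p R).apply_symm_apply _

variable [IsAdicComplete (span {(p : A)}) A]

noncomputable def liftOfQuotientEquiv : WittVector p R →+* A :=
  IsAdicComplete.StrictMono.liftRingHom (span {(p : A)}) add_left_strictMono
    (liftOfQuotientEquivModPow g) (factorPow_comp_liftOfQuotientEquivModPow_succ g _)

theorem mk_pow_liftOfQuotientEquiv (n : ℕ) (x : WittVector p R) :
    Ideal.Quotient.mk _ (liftOfQuotientEquiv g x) = liftOfQuotientEquivModPow g n x :=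
  IsAdicComplete.StrictMono.mk_liftRingHom (n := n) _ _ _ _ x

theorem mk_liftOfQuotientEquiv (x : WittVector p R) :
    Ideal.Quotient.mk _ (liftOfQuotientEquiv g x) = g.symm (x.coeff 0) := by
  rw [← Quotient.factor_mk (pow_one (span {(p : A)})).le, mk_pow_liftOfQuotientEquiv g 0,
    liftOfQuotientEquivModPow, RingHom.comp_apply, factor_ghostComponentModPow_zero]
  simp

end PerfectRing

end WittVector

/-- A strict `p`-ring with perfect residue ring `R` of characteristic `p` is uniquely
isomorphic to the ring of Witt vectors `W(R)`: if `A` is a ring in which `p` is not a zero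
divisor, which is separated and complete for the `p`-adic topology, together with an
identification `ḡ : A/pA ≅ R`, then there is a unique ring isomorphism `f : W(R) ≅ A`
whose reduction modulo `p` is `ḡ⁻¹` composed with the canonical projection `W(R) → R`. -/
theorem witt_vectors_universal_property (p : ℕ) [Fact p.Prime]
    (R : Type*) [CommRing R] [CharP R p] [PerfectRing R p]
    (A : Type*) [CommRing A]
    (hreg : ∀ a : A, (p : A) * a = 0 → a = 0)
    [IsAdicComplete (Ideal.span {(p : A)}) A]
    (g : A ⧸ Ideal.span {(p : A)} ≃+* R) :
    ∃! f : WittVector p R ≃+* A,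
      ∀ x : WittVector p R,
        Ideal.Quotient.mk (Ideal.span {(p : A)}) (f x) = g.symm (x.coeff 0) := by
  set F := WittVector.liftOfQuotientEquiv g
  have hF : ∀ x, Ideal.Quotient.mk _ (F x) = g.symm (x.coeff 0) :=
    WittVector.mk_liftOfQuotientEquiv g
  have hinj : (span {(p : A)}).comap F ≤ span {(p : WittVector p R)} := by
    intro x hx
    rw [mem_comap, ← Ideal.Quotient.eq_zero_iff_mem, hF, map_eq_zero_iff _ g.symm.injective] at hx
    exact (WittVector.mem_span_p_iff_coeff_zero_eq_zero x).mpr hx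
  have hsurj : Function.Surjective (Ideal.Quotient.mk (span {(p : A)}) ∘ F) := fun y =>
    ⟨WittVector.teichmuller p (g y), by
      rw [Function.comp_apply, hF, WittVector.teichmuller_coeff_zero, g.symm_apply_apply]⟩
  refine ⟨RingEquiv.ofBijective F ⟨F.injective_of_comap_span_le hreg hinj,
    F.surjective_of_surjective_mk_comp hsurj⟩, hF, fun f hf => ?_⟩
  exact RingEquiv.toRingHom_injective <|
    WittVector.ringHom_ext_of_mk_eq fun x => (hf x).trans (hF x).symm
end

section
/- Fix a prime p and let 𝒪 be the ring of integers of C, the completion of an algebraic closure of ℚ_p. Let Ẽ⁺ = { (x^{(i)})_{i≥0} : x^{(i)} ∈ 𝒪, (x^{(i+1)})^p = x^{(i)} }, a commutative ring of characteristic p with multiplication (xy)^{(i)} = x^{(i)}y^{(i)} and addition (x+y)^{(i)} = lim_{j→∞}(x^{(i+j)} + y^{(i+j)})^{p^j}. Fix a compatible system of primitive p^n-th roots of unity ε^{(n)} ∈ 𝒪 and let ε = (ε^{(i)})_{i≥0} ∈ Ẽ⁺. Then Ẽ⁺ is an integral domain, and the localization Ẽ := Ẽ⁺[(ε−1)^{-1}]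 is a field; equivalently, for every nonzero x ∈ Ẽ⁺ there exist y ∈ Ẽ⁺ and an integer k ≥ 0 such that x·y = (ε−1)^k. -/
/-!
Everything rests on `‖(ε - 1)^{(0)}‖ < 1`. On the unit ball `(a + b)^{p^n} ≡ a^{p^n} + b^{p^n}`
modulo `p`, so each approximant `(ε^{(j)} - 1)^{p^j}` is congruent to `ε^{(0)} - 1 = 0`, whence
`‖(ε - 1)^{(0)}‖ ≤ ‖p‖ < 1`. Since `x^{(i)} = (x^{(i+m)})^{p^m}`, a nonzero `x` has no zero
component, and norms at level `i` are the `p^i`-th roots of the norms at level `0`. Choosing `k`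
with `‖(ε - 1)^{(0)}‖^k ≤ ‖x^{(0)}‖` thus gives the same inequality at every level, so the
componentwise quotient `(ε - 1)^k / x` lies in `Ẽ⁺`.
-/

open Filter Topology

/-- The (pre-)tilt `Ẽ⁺ = lim_{x ↦ x^p} 𝒪_C` of the ring of integers of `C`:
`p`-power-compatible sequences of elements of the closed unit ball of `C`.
Its multiplication is componentwise. -/
def TiltSeq (p : ℕ) (C : Type*) [NormedField C] : Type _ :=
  {f : ℕ → C // (∀ i, ‖f i‖ ≤ 1) ∧ ∀ i, f (i + 1) ^ p = f i}

section PowCompatible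

variable {M : Type*} {p : ℕ} {f : ℕ → M}

theorem pow_pow_eq_of_pow_succ_eq [Monoid M] (hf : ∀ i, f (i + 1) ^ p = f i) (i m : ℕ) :
    f (i + m) ^ p ^ m = f i := by
  induction m with
  | zero => simp
  | succ m ih => rw [← ih, ← hf (i + m), ← pow_mul, ← pow_succ', add_assoc]

theorem eq_zero_of_pow_succ_eq [MonoidWithZero M] [NoZeroDivisors M] (hp : p ≠ 0)
    (hf : ∀ i, f (i + 1) ^ p = f i) {i : ℕ} (hi : f i = 0) (j : ℕ) : f j = 0 := by
  have h0 : f 0 = 0 := by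
    rw [← pow_pow_eq_of_pow_succ_eq hf 0 i, zero_add, hi, zero_pow (pow_ne_zero i hp)]
  rw [← pow_pow_eq_of_pow_succ_eq hf 0 j, zero_add] at h0
  exact pow_eq_zero_iff (pow_ne_zero j hp) |>.mp h0

end PowCompatible

theorem norm_le_norm_of_pow_succ_eq {C : Type*} [NormedField C] {p : ℕ} {g f : ℕ → C}
    (hp : p ≠ 0) (hg : ∀ i, g (i + 1) ^ p = g i) (hf : ∀ i, f (i + 1) ^ p = f i)
    (h0 : ‖g 0‖ ≤ ‖f 0‖) (i : ℕ) : ‖g i‖ ≤ ‖f i‖ := by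
  rw [← pow_pow_eq_of_pow_succ_eq hg 0 i, ← pow_pow_eq_of_pow_succ_eq hf 0 i, zero_add,
    norm_pow, norm_pow] at h0
  exact (pow_le_pow_iff_left₀ (norm_nonneg _) (norm_nonneg _) (pow_ne_zero i hp)).mp h0

theorem TiltSeq.exists_mul_eq_of_norm_le {p : ℕ} {C : Type*} [NormedField C] (hp : p ≠ 0)
    (x : TiltSeq p C) (hx : x.1 0 ≠ 0) {z : ℕ → C} (hz : ∀ i, z (i + 1) ^ p = z i)
    (hzx : ‖z 0‖ ≤ ‖x.1 0‖) : ∃ y : TiltSeq p C, ∀ i, x.1 i * y.1 i = z i := by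
  have hxi (i : ℕ) : x.1 i ≠ 0 := fun h => hx (eq_zero_of_pow_succ_eq hp x.2.2 h 0)
  refine ⟨⟨fun i => z i / x.1 i, fun i => ?_, fun i => ?_⟩,
    fun i => mul_div_cancel₀ _ (hxi i)⟩
  · rw [norm_div, div_le_one (norm_pos_iff.mpr (hxi i))]
    exact norm_le_norm_of_pow_succ_eq hp hz x.2.2 hzx i
  · rw [div_pow, hz, x.2.2]

section Ultrametric

variable {C : Type*} [NormedField C] [IsUltrametricDist C] {p : ℕ}

theorem norm_add_pow_prime_pow_sub_le (hp : p.Prime) {a b : C} (ha : ‖a‖ ≤ 1) (hb : ‖b‖ ≤ 1)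
    (n : ℕ) : ‖(a + b) ^ p ^ n - (a ^ p ^ n + b ^ p ^ n)‖ ≤ ‖(p : C)‖ := by
  let O := (NormedField.valuation (K := C)).integer
  have mem_iff (c : C) : c ∈ O ↔ ‖c‖ ≤ 1 := by
    rw [Valuation.mem_integer_iff, NormedField.valuation_apply]; exact_mod_cast Iff.rfl
  obtain ⟨r, hr⟩ :=
    exists_add_pow_prime_pow_eq hp (⟨a, (mem_iff a).2 ha⟩ : O) ⟨b, (mem_iff b).2 hb⟩ n
  have hr' := congrArg (fun c : O => (c : C)) hr
  have hr1 : ‖(r : C)‖ ≤ 1 := (mem_iff r).1 r.2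
  simp only [Subring.coe_add, Subring.coe_pow, Subring.coe_mul, Subring.coe_natCast] at hr'
  rw [hr', add_sub_cancel_left, norm_mul, norm_mul, norm_mul]
  calc ‖(p : C)‖ * ‖a‖ * ‖b‖ * ‖(r : C)‖ ≤ ‖(p : C)‖ * 1 * 1 * 1 := by gcongr
    _ = ‖(p : C)‖ := by ring

theorem norm_le_of_tendsto_sub_one_pow (hp : p.Prime) {e : ℕ → C} (he : ∀ j, ‖e j‖ ≤ 1)
    (he1 : ∀ j, e j ^ p ^ j = 1) {c : C}
    (hc : Tendsto (fun j => (e j - 1) ^ p ^ j) atTop (𝓝 c)) : ‖c‖ ≤ ‖(p : C)‖ := by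
  refine le_of_tendsto' hc.norm fun j => ?_
  have hej : ‖e j - 1‖ ≤ 1 := by
    simpa [sub_eq_add_neg] using
      (IsUltrametricDist.norm_add_le_max (e j) (-1)).trans (max_le (he j) (by simp))
  have key := norm_add_pow_prime_pow_sub_le hp hej norm_one.le j
  rwa [sub_add_cancel, he1, one_pow, sub_add_cancel_right, norm_neg] at key

end Ultrametric

/-- `Ẽ⁺` is an integral domain (it has no zero divisors and `0 ≠ 1`), and
`Ẽ = Ẽ⁺[(ε-1)⁻¹]` is a field: every nonzero `x ∈ Ẽ⁺` divides a power of `ε - 1`,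
i.e. there are `y ∈ Ẽ⁺` and `k ≥ 0` with `x·y = (ε-1)^k`.  Here `ε` is the element of
`Ẽ⁺` given by a compatible system of primitive `p^n`-th roots of unity, `d = ε - 1`
is computed with the tilt addition `(ε-1)^{(i)} = lim_j (ε^{(i+j)} - 1)^{p^j}`, and
multiplication (hence also `(ε-1)^k`) is componentwise. -/
theorem tilt_domain_and_field_after_inverting_eps_sub_one
    (p : ℕ) [Fact p.Prime]
    (C : Type*) [NormedField C] [IsUltrametricDist C]
    (hnorm : ∀ r : ℚ, ‖(r : C)‖ = ‖(r : ℚ_[p])‖)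
    (ε : TiltSeq p C) (hε0 : ε.1 0 = 1)
    (d : TiltSeq p C)
    (hd : ∀ i, Tendsto (fun j => (ε.1 (i + j) - 1) ^ p ^ j) atTop (𝓝 (d.1 i))) :
    ((⟨fun _ => 0, fun _ => by simp, fun _ => zero_pow (Fact.out : p.Prime).ne_zero⟩ : TiltSeq p C) ≠
      ⟨fun _ => 1, fun _ => norm_one.le, fun _ => one_pow p⟩) ∧
    (∀ x y : TiltSeq p C, (∀ i, x.1 i * y.1 i = 0) →
      (∀ i, x.1 i = 0) ∨ (∀ i, y.1 i = 0)) ∧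
    (∀ x : TiltSeq p C, (∃ i, x.1 i ≠ 0) →
      ∃ (y : TiltSeq p C) (k : ℕ), ∀ i, x.1 i * y.1 i = d.1 i ^ k) := by
  have hp : p.Prime := Fact.out
  have hne (x : TiltSeq p C) {i : ℕ} (hi : x.1 i ≠ 0) (j : ℕ) : x.1 j ≠ 0 :=
    fun h => hi (eq_zero_of_pow_succ_eq hp.ne_zero x.2.2 h i)
  refine ⟨fun h => zero_ne_one (congrArg (fun z : TiltSeq p C => z.1 0) h), ?_, ?_⟩
  · intro x y hxy
    refine or_iff_not_imp_left.mpr fun hx j => ?_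
    obtain ⟨i, hi⟩ := not_forall.mp hx
    exact (mul_eq_zero.mp (hxy j)).resolve_left (hne x hi j)
  · rintro x ⟨i, hi⟩
    have hpC : ‖(p : C)‖ < 1 := by
      have := hnorm p
      rw [Rat.cast_natCast, Rat.cast_natCast, Padic.norm_p] at this
      exact this ▸ inv_lt_one_of_one_lt₀ (by exact_mod_cast hp.one_lt)
    have hd0 : ‖d.1 0‖ < 1 := by
      refine (norm_le_of_tendsto_sub_one_pow hp ε.2.1 (fun j => ?_) ?_).trans_lt hpC
      · rw [← hε0, ← pow_pow_eq_of_pow_succ_eq ε.2.2 0 j, zero_add]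
      · simpa using hd 0
    obtain ⟨k, hk⟩ := exists_pow_lt_of_lt_one (norm_pos_iff.mpr (hne x hi 0)) hd0
    have hdk (i : ℕ) : (d.1 (i + 1) ^ k) ^ p = d.1 i ^ k := by
      rw [← pow_mul, mul_comm, pow_mul, d.2.2 i]
    obtain ⟨y, hy⟩ := x.exists_mul_eq_of_norm_le hp.ne_zero (hne x hi 0)
      (z := fun i => d.1 i ^ k) hdk ((norm_pow (d.1 0) k).trans_le hk.le)
    exact ⟨y, k, hy⟩
end
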